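/- arXiv:1705.00146 — 5 statements merged into one kernel-verified Lean document; each statement's English description precedes it below -/
import Mathlib

section
/- Let N ∈ ℕ, Γ₁,…,Γ_N be real numbers, P_K : (0,∞) → ℝ a continuous function, and let X₁,…,X_N be a solution of the EP-PV system on an interval J ⊆ ℝ. Then the map t ↦ Σ_{n=1}^N Γ_n |X_n(t)|² (the angular impulse I) is constant on J. -/
open scoped BigOperators

/-- The perpendicular `(v₁, v₂)^⊥ = (v₂, −v₁)` of a vector in ℝ². -/
noncomputable def perp (v : EuclideanSpace ℝ (Fin 2)) : EuclideanSpace ℝ (Fin 2) :=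
  (WithLp.equiv 2 (Fin 2 → ℝ)).symm ![v 1, -v 0]

/-- The right-hand side of the (scaled) Euler–Poincaré point-vortex system for the
`n`-th vortex, given the current positions `X`. -/
noncomputable def eppvRHS {N : ℕ} (Γ : Fin N → ℝ) (P_K : ℝ → ℝ)
    (X : Fin N → EuclideanSpace ℝ (Fin 2)) (n : Fin N) : EuclideanSpace ℝ (Fin 2) :=
  (-(1 / (2 * Real.pi))) • ∑ m ∈ Finset.univ.filter (fun m => m ≠ n),
    ((Γ m * P_K ‖X n - X m‖) / ‖X n - X m‖ ^ 2) • perp (X n - X m)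

/-- `X : Fin N → ℝ → ℝ²` is a solution of the EP-PV system on `J ⊆ ℝ`:
the vortices stay pairwise distinct on `J` and each curve is differentiable on `J`
with derivative given by the EP-PV vector field. -/
def IsEPPVSolution {N : ℕ} (Γ : Fin N → ℝ) (P_K : ℝ → ℝ) (J : Set ℝ)
    (X : Fin N → ℝ → EuclideanSpace ℝ (Fin 2)) : Prop :=
  (∀ m n : Fin N, m ≠ n → ∀ t ∈ J, X m t ≠ X n t) ∧
  (∀ n : Fin N, ∀ t ∈ J,
    HasDerivWithinAt (X n) (eppvRHS Γ P_K (fun m => X m t) n) J t)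

/-!
Differentiating, `dI/dt = 2 Σ_n Γ_n ⟪X_n, X_n'⟫`. Inserting the vector field, the pair `(n, m)`
contributes `Γ_n Γ_m P_K(r)/r² · ⟪X_n, (X_n − X_m)^⊥⟫` with `r = |X_n − X_m|`. The weight is symmetric
in `(n, m)`, while `⟪X_n, (X_n − X_m)^⊥⟫ = ⟪X_m, X_n^⊥⟫` is antisymmetric, so the double sum vanishes.
-/

open scoped RealInnerProductSpace

theorem Finset.sum_sum_eq_zero_of_antisymm {ι G : Type*} [AddCommGroup G] [IsAddTorsionFree G]
    (s : Finset ι) {f : ι → ι → G} (hf : ∀ i j, f i j = -f j i) :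
    ∑ i ∈ s, ∑ j ∈ s, f i j = 0 := by
  rw [← self_eq_neg]
  calc ∑ i ∈ s, ∑ j ∈ s, f i j = ∑ j ∈ s, ∑ i ∈ s, f i j := Finset.sum_comm
    _ = -∑ j ∈ s, ∑ i ∈ s, f j i := by
      simp only [← Finset.sum_neg_distrib]
      exact Finset.sum_congr rfl fun j _ => Finset.sum_congr rfl fun i _ => hf i j

theorem Convex.is_const_of_hasDerivWithinAt_zero {G : Type*} [NormedAddCommGroup G]
    [NormedSpace ℝ G] {f : ℝ → G} {s : Set ℝ} (hs : Convex ℝ s)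
    (hf : ∀ t ∈ s, HasDerivWithinAt f 0 s t) {x y : ℝ} (hx : x ∈ s) (hy : y ∈ s) :
    f x = f y := by
  have h := hs.norm_image_sub_le_of_norm_hasDerivWithin_le hf (C := 0) (fun _ _ => by simp) hy hx
  rwa [zero_mul, norm_le_zero_iff, sub_eq_zero] at h

lemma perp_zero : perp 0 = 0 := by
  ext i
  fin_cases i <;> simp [perp]

lemma inner_perp (u v : EuclideanSpace ℝ (Fin 2)) : ⟪u, perp v⟫ = u 0 * v 1 - u 1 * v 0 := by
  simp only [perp, WithLp.equiv_symm_apply, PiLp.inner_apply, RCLike.inner_apply,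
    Real.ringHom_apply, Fin.sum_univ_two, Matrix.cons_val_zero, Matrix.cons_val_one,
    Matrix.cons_val_fin_one]
  ring

lemma inner_perp_anticomm (u v : EuclideanSpace ℝ (Fin 2)) : ⟪u, perp v⟫ = -⟪v, perp u⟫ := by
  rw [inner_perp, inner_perp]
  ring

lemma inner_perp_self_sub (u v : EuclideanSpace ℝ (Fin 2)) : ⟪u, perp (u - v)⟫ = ⟪v, perp u⟫ := by
  rw [inner_perp, inner_perp, PiLp.sub_apply, PiLp.sub_apply]
  ring

section AngularImpulse

variable {ι E : Type*} [Fintype ι] [NormedAddCommGroup E] [InnerProductSpace ℝ E]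

def angularImpulse (Γ : ι → ℝ) (x : ι → E) : ℝ :=
  ∑ n, Γ n * ‖x n‖ ^ 2

theorem hasDerivWithinAt_angularImpulse (Γ : ι → ℝ) {X : ι → ℝ → E} {V : ι → E} {J : Set ℝ}
    {t : ℝ} (hX : ∀ n, HasDerivWithinAt (X n) (V n) J t) :
    HasDerivWithinAt (fun τ => angularImpulse Γ (X · τ)) (2 * ∑ n, Γ n * ⟪X n t, V n⟫) J t := by
  refine (HasDerivWithinAt.fun_sum fun n _ => ((hX n).norm_sq.const_mul (Γ n))).congr_deriv ?_
  rw [Finset.mul_sum]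
  exact Finset.sum_congr rfl fun n _ => by ring

end AngularImpulse

lemma eppvRHS_eq_sum {N : ℕ} (Γ : Fin N → ℝ) (P_K : ℝ → ℝ) (X : Fin N → EuclideanSpace ℝ (Fin 2))
    (n : Fin N) :
    eppvRHS Γ P_K X n = (-(1 / (2 * Real.pi))) • ∑ m,
      ((Γ m * P_K ‖X n - X m‖) / ‖X n - X m‖ ^ 2) • perp (X n - X m) := by
  rw [eppvRHS, Finset.sum_filter_of_ne]
  rintro m - hm rfl
  simp [perp_zero] at hm

theorem sum_mul_inner_eppvRHS {N : ℕ} (Γ : Fin N → ℝ) (P_K : ℝ → ℝ)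
    (X : Fin N → EuclideanSpace ℝ (Fin 2)) :
    ∑ n, Γ n * ⟪X n, eppvRHS Γ P_K X n⟫ = 0 := by
  set w : Fin N → Fin N → ℝ := fun n m => Γ n * Γ m * P_K ‖X n - X m‖ / ‖X n - X m‖ ^ 2
  have hterm : ∀ n, Γ n * ⟪X n, eppvRHS Γ P_K X n⟫
      = -(1 / (2 * Real.pi)) * ∑ m, w n m * ⟪X m, perp (X n)⟫ := by
    intro n
    simp only [eppvRHS_eq_sum, inner_smul_right, inner_sum, Finset.mul_sum, inner_perp_self_sub, w]
    exact Finset.sum_congr rfl fun m _ => by ring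
  have hw : ∀ n m, w n m = w m n := fun n m => by simp only [w, norm_sub_rev (X n)]; ring
  rw [Finset.sum_congr rfl fun n _ => hterm n, ← Finset.mul_sum,
    Finset.sum_sum_eq_zero_of_antisymm, mul_zero]
  intro n m
  rw [hw, inner_perp_anticomm, mul_neg]

theorem IsEPPVSolution.hasDerivWithinAt_angularImpulse_zero {N : ℕ} {Γ : Fin N → ℝ} {P_K : ℝ → ℝ}
    {J : Set ℝ} {X : Fin N → ℝ → EuclideanSpace ℝ (Fin 2)} (hX : IsEPPVSolution Γ P_K J X)
    {t : ℝ} (ht : t ∈ J) :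
    HasDerivWithinAt (fun τ => angularImpulse Γ (X · τ)) 0 J t := by
  have h := hasDerivWithinAt_angularImpulse Γ fun n => hX.2 n t ht
  rwa [sum_mul_inner_eppvRHS, mul_zero] at h

theorem eppv_angular_impulse_const_general {N : ℕ} (Γ : Fin N → ℝ) (P_K : ℝ → ℝ)
    (J : Set ℝ) (hJ : Convex ℝ J)
    (X : Fin N → ℝ → EuclideanSpace ℝ (Fin 2))
    (hX : IsEPPVSolution Γ P_K J X) :
    ∀ s ∈ J, ∀ t ∈ J,
      ∑ n : Fin N, Γ n * ‖X n s‖ ^ 2 = ∑ n : Fin N, Γ n * ‖X n t‖ ^ 2 := fun _ hs _ ht =>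
  hJ.is_const_of_hasDerivWithinAt_zero (fun _ hτ => hX.hasDerivWithinAt_angularImpulse_zero hτ) hs ht

/-- Along any solution of the EP-PV system on an interval `J`,
the angular impulse `Σ_n Γ_n |X_n(t)|²` is constant. -/
theorem eppv_angular_impulse_const {N : ℕ} (Γ : Fin N → ℝ) (P_K : ℝ → ℝ)
    (hPK : ContinuousOn P_K (Set.Ioi 0)) (J : Set ℝ) (hJ : Convex ℝ J)
    (X : Fin N → ℝ → EuclideanSpace ℝ (Fin 2))
    (hX : IsEPPVSolution Γ P_K J X) :
    ∀ s ∈ J, ∀ t ∈ J,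
      ∑ n : Fin N, Γ n * ‖X n s‖ ^ 2 = ∑ n : Fin N, Γ n * ‖X n t‖ ^ 2 :=
  eppv_angular_impulse_const_general Γ P_K J hJ X hX
end

section
/- Let N ∈ ℕ, Γ₁,…,Γ_N be real numbers, P_K : (0,∞) → ℝ a continuous function, and let H_P : (0,∞) → ℝ be differentiable with H_P'(r) = P_K(√r)/(2r) for all r > 0. If X₁,…,X_N is a solution of the EP-PV system on an interval J ⊆ ℝ, then the Hamiltonian t ↦ −(1/(2π)) Σ_{1 ≤ m < n ≤ N} Γ_m Γ_n H_P(|X_m(t) − X_n(t)|²) is constant on J. -/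
open scoped BigOperators

/-!
Along the flow, `d/dt H_P(‖X_m - X_n‖²) = (P_K(L)/L²) ⟪X_m' - X_n', X_m - X_n⟫` with `L = ‖X_m - X_n‖`.
Weighting by `Γ_m Γ_n` and splitting each pair term into its two halves, the derivative of the
Hamiltonian becomes `Σ_m Γ_m ⟪X_m', U_m⟫` with `U_m = Σ_{n ≠ m} (Γ_n P_K(L_mn)/L_mn²) (X_m - X_n)`.
The equations of motion say `X_m' = -(1/2π) U_m^⊥`, so every term vanishes, and a function with
zero derivative on the convex set `J` is constant there.
-/

open scoped RealInnerProductSpace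
open Finset

noncomputable def perpLinearMap : EuclideanSpace ℝ (Fin 2) →ₗ[ℝ] EuclideanSpace ℝ (Fin 2) where
  toFun := perp
  map_add' v w := by
    ext i; fin_cases i <;> simp [perp]; ring
  map_smul' a v := by
    ext i; fin_cases i <;> simp [perp]

@[simp] lemma perpLinearMap_apply (v : EuclideanSpace ℝ (Fin 2)) : perpLinearMap v = perp v := rfl

lemma inner_perp_self (v : EuclideanSpace ℝ (Fin 2)) : ⟪perp v, v⟫ = 0 := by
  simp [perp, PiLp.inner_apply, Fin.sum_univ_two]
  ring

lemma sum_filter_lt_add_swap {ι M : Type*} [Fintype ι] [LinearOrder ι] [AddCommMonoid M]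
    (F : ι → ι → M) :
    ∑ m, ∑ n ∈ univ.filter (fun n => m < n), (F m n + F n m)
      = ∑ m, ∑ n ∈ univ.filter (fun n => n ≠ m), F m n := by
  have hsplit (m : ι) : ∑ n ∈ univ.filter (fun n => n ≠ m), F m n
      = ∑ n ∈ univ.filter (fun n => m < n), F m n
        + ∑ n ∈ univ.filter (fun n => n < m), F m n := by
    rw [← sum_union (disjoint_filter.2 fun n _ h₁ h₂ => h₁.not_gt h₂), ← filter_or]
    simp_rw [ne_iff_lt_or_gt, or_comm]
  have hswap : ∑ m, ∑ n ∈ univ.filter (fun n => n < m), F m n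
      = ∑ m, ∑ n ∈ univ.filter (fun n => m < n), F n m :=
    sum_comm' fun _ _ => by simp
  simp only [hsplit, sum_add_distrib, hswap]

lemma Convex.eq_of_forall_hasDerivWithinAt_zero {F : Type*} [NormedAddCommGroup F]
    [NormedSpace ℝ F] {f : ℝ → F} {s : Set ℝ} (hs : Convex ℝ s)
    (hf : ∀ x ∈ s, HasDerivWithinAt f 0 s x) {x y : ℝ} (hx : x ∈ s) (hy : y ∈ s) :
    f x = f y := by
  have := hs.norm_image_sub_le_of_norm_hasDerivWithin_le hf (fun _ _ => norm_zero.le) hx hy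
  rw [zero_mul, norm_le_zero_iff, sub_eq_zero] at this
  exact this.symm

lemma HasDerivWithinAt.comp_norm_sq {F : Type*} [NormedAddCommGroup F] [InnerProductSpace ℝ F]
    {P H : ℝ → ℝ} (hH : ∀ r : ℝ, 0 < r → HasDerivAt H (P (Real.sqrt r) / (2 * r)) r)
    {f : ℝ → F} {f' : F} {s : Set ℝ} {t : ℝ} (hf : HasDerivWithinAt f f' s t) (hft : f t ≠ 0) :
    HasDerivWithinAt (fun τ => H (‖f τ‖ ^ 2)) (P ‖f t‖ / ‖f t‖ ^ 2 * ⟪f', f t⟫) s t := by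
  have hpos : 0 < ‖f t‖ := norm_pos_iff.2 hft
  refine ((hH _ (by positivity)).comp_hasDerivWithinAt t hf.norm_sq).congr_deriv ?_
  rw [Real.sqrt_sq hpos.le, real_inner_comm]
  field_simp

lemma eppvRHS_eq_smul_perp {N : ℕ} (Γ : Fin N → ℝ) (P_K : ℝ → ℝ)
    (Y : Fin N → EuclideanSpace ℝ (Fin 2)) (n : Fin N) :
    eppvRHS Γ P_K Y n = (-(1 / (2 * Real.pi))) • perp (∑ m ∈ univ.filter (fun m => m ≠ n),
      ((Γ m * P_K ‖Y n - Y m‖) / ‖Y n - Y m‖ ^ 2) • (Y n - Y m)) := by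
  simp only [eppvRHS, ← perpLinearMap_apply, map_sum, map_smul]

lemma inner_eppvRHS_eq_zero {N : ℕ} (Γ : Fin N → ℝ) (P_K : ℝ → ℝ)
    (Y : Fin N → EuclideanSpace ℝ (Fin 2)) (n : Fin N) :
    ⟪eppvRHS Γ P_K Y n, ∑ m ∈ univ.filter (fun m => m ≠ n),
      ((Γ m * P_K ‖Y n - Y m‖) / ‖Y n - Y m‖ ^ 2) • (Y n - Y m)⟫ = 0 := by
  rw [eppvRHS_eq_smul_perp, real_inner_smul_left, inner_perp_self, mul_zero]

lemma sum_pairs_inner_eppvRHS_eq_zero {N : ℕ} (Γ : Fin N → ℝ) (P_K : ℝ → ℝ)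
    (Y : Fin N → EuclideanSpace ℝ (Fin 2)) :
    ∑ m, ∑ n ∈ univ.filter (fun n => m < n), Γ m * Γ n * (P_K ‖Y m - Y n‖ / ‖Y m - Y n‖ ^ 2 *
      ⟪eppvRHS Γ P_K Y m - eppvRHS Γ P_K Y n, Y m - Y n⟫) = 0 := by
  set V := eppvRHS Γ P_K Y
  set F : Fin N → Fin N → ℝ := fun m n =>
    Γ m * ⟪V m, ((Γ n * P_K ‖Y m - Y n‖) / ‖Y m - Y n‖ ^ 2) • (Y m - Y n)⟫
  have hpair (m n : Fin N) :
      Γ m * Γ n * (P_K ‖Y m - Y n‖ / ‖Y m - Y n‖ ^ 2 * ⟪V m - V n, Y m - Y n⟫)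
        = F m n + F n m := by
    simp only [F, real_inner_smul_right, inner_sub_left, inner_sub_right, norm_sub_rev (Y n)]
    ring
  simp only [hpair, sum_filter_lt_add_swap]
  refine sum_eq_zero fun m _ => ?_
  simp only [F, ← mul_sum, ← inner_sum]
  exact mul_eq_zero_of_right _ (inner_eppvRHS_eq_zero Γ P_K Y m)

theorem eppv_hamiltonian_const_general {N : ℕ} (Γ : Fin N → ℝ) (P_K : ℝ → ℝ)
    (H_P : ℝ → ℝ)
    (hHP : ∀ r : ℝ, 0 < r → HasDerivAt H_P (P_K (Real.sqrt r) / (2 * r)) r)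
    (J : Set ℝ) (hJ : Convex ℝ J)
    (X : Fin N → ℝ → EuclideanSpace ℝ (Fin 2))
    (hX : IsEPPVSolution Γ P_K J X) :
    ∀ s ∈ J, ∀ t ∈ J,
      (-(1 / (2 * Real.pi))) * ∑ m : Fin N, ∑ n ∈ Finset.univ.filter (fun n => m < n),
          Γ m * Γ n * H_P (‖X m s - X n s‖ ^ 2)
        = (-(1 / (2 * Real.pi))) * ∑ m : Fin N, ∑ n ∈ Finset.univ.filter (fun n => m < n),
          Γ m * Γ n * H_P (‖X m t - X n t‖ ^ 2) := by
  obtain ⟨hdistinct, hderiv⟩ := hX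
  have hzero_deriv : ∀ τ ∈ J, HasDerivWithinAt (fun τ => ∑ m : Fin N,
      ∑ n ∈ univ.filter (fun n => m < n), Γ m * Γ n * H_P (‖X m τ - X n τ‖ ^ 2)) 0 J τ := by
    intro τ hτ
    rw [← sum_pairs_inner_eppvRHS_eq_zero Γ P_K (fun i => X i τ)]
    refine HasDerivWithinAt.fun_sum fun m _ => HasDerivWithinAt.fun_sum fun n hn => ?_
    have hmn : X m τ - X n τ ≠ 0 :=
      sub_ne_zero.2 (hdistinct m n (mem_filter.1 hn).2.ne τ hτ)
    exact (((hderiv m τ hτ).sub (hderiv n τ hτ)).comp_norm_sq hHP hmn).const_mul _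
  intro s hs t ht
  rw [hJ.eq_of_forall_hasDerivWithinAt_zero hzero_deriv hs ht]

/-- Let `H_P` be differentiable on `(0,∞)` with
`H_P'(r) = P_K(√r)/(2r)`. Along any solution of the EP-PV system on an interval `J`,
the Hamiltonian `−(1/2π) Σ_{m<n} Γ_m Γ_n H_P(|X_m − X_n|²)` is constant. -/
theorem eppv_hamiltonian_const {N : ℕ} (Γ : Fin N → ℝ) (P_K : ℝ → ℝ)
    (hPK : ContinuousOn P_K (Set.Ioi 0))
    (H_P : ℝ → ℝ)
    (hHP : ∀ r : ℝ, 0 < r → HasDerivAt H_P (P_K (Real.sqrt r) / (2 * r)) r)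
    (J : Set ℝ) (hJ : Convex ℝ J)
    (X : Fin N → ℝ → EuclideanSpace ℝ (Fin 2))
    (hX : IsEPPVSolution Γ P_K J X) :
    ∀ s ∈ J, ∀ t ∈ J,
      (-(1 / (2 * Real.pi))) * ∑ m : Fin N, ∑ n ∈ Finset.univ.filter (fun n => m < n),
          Γ m * Γ n * H_P (‖X m s - X n s‖ ^ 2)
        = (-(1 / (2 * Real.pi))) * ∑ m : Fin N, ∑ n ∈ Finset.univ.filter (fun n => m < n),
          Γ m * Γ n * H_P (‖X m t - X n t‖ ^ 2) :=
  eppv_hamiltonian_const_general Γ P_K H_P hHP J hJ X hX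
end

section
/- Let h : ℝ² → [0,∞) be a radial function, h(x) = h_r(|x|), with h_r : [0,∞) → [0,∞) monotone nonincreasing, and suppose h ∈ L¹(ℝ²) ∩ L²(ℝ²). Let L : ℝ → (0,∞) be measurable and suppose there exist c₀ > 0 and τ₀ > 0 such that L(τ) ≥ c₀ √|τ| for all |τ| ≥ τ₀. Then the function τ ↦ ∫_{ℝ²} h((L(τ), 0) − y) h(y) dy is Lebesgue integrable on ℝ. -/
/-!
For `x = (L(τ), 0)`, every `y` has `‖y‖ ≥ ‖x‖/2` or `‖x - y‖ ≥ ‖x‖/2`, so monotonicity of the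
profile gives `(h ∗ h)(x) ≤ 2 h_r(‖x‖/2) ‖h‖₁`, while AM–GM gives `(h ∗ h)(x) ≤ ‖h‖₂²` for all `x`.
Since `L(τ) ≥ c₀ √|τ|` for large `|τ|`, the substitution `τ = (2r/c₀)²` turns
`∫ h_r(c₀ √|τ| / 2) dτ` into a multiple of `∫₀^∞ r h_r(r) dr`, which is finite by polar
coordinates because `h ∈ L¹(ℝ²)`.
-/

open MeasureTheory Set

theorem integrable_comp_abs_of_integrableOn_Ioi {E : Type*} [NormedAddCommGroup E] {f : ℝ → E}
    (hf : IntegrableOn f (Ioi 0)) : Integrable fun x => f |x| := by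
  have hIoi : IntegrableOn (fun x => f |x|) (Ioi 0) :=
    hf.congr_fun (fun x hx => by rw [abs_of_pos (mem_Ioi.1 hx)]) measurableSet_Ioi
  have hIio : IntegrableOn (fun x => f |x|) (Iio 0) := by
    have hneg := (Measure.measurePreserving_neg (volume : Measure ℝ)).integrableOn_comp_preimage
      (Homeomorph.neg ℝ).measurableEmbedding (f := fun x => f |x|) (s := Ioi 0)
    simpa [Function.comp_def, neg_preimage] using hneg.2 hIoi
  rw [← integrableOn_univ, ← Iio_union_Ici (a := (0 : ℝ)), integrableOn_union]
  exact ⟨hIio, (integrableOn_Ici_iff_integrableOn_Ioi (by simp)).2 hIoi⟩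

theorem integrable_comp_mul_sqrt_abs {E : Type*} [NormedAddCommGroup E] [NormedSpace ℝ E]
    {f : ℝ → E} (hf : IntegrableOn (fun y => y • f y) (Ioi 0)) {c : ℝ} (hc : 0 < c) :
    Integrable fun τ => f (c * √|τ|) := by
  refine integrable_comp_abs_of_integrableOn_Ioi (f := fun τ => f (c * √τ)) ?_
  -- substitute `τ = y ^ 2`, then rescale `y ↦ c * y`
  rw [← integrableOn_Ioi_comp_rpow_iff' (fun τ => f (c * √τ)) two_ne_zero]
  have hscaled : IntegrableOn (fun y => c⁻¹ • ((c * y) • f (c * y))) (Ioi 0) :=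
    ((integrableOn_Ioi_comp_mul_left_iff (fun y => y • f y) 0 hc).2
      (by rwa [mul_zero])).smul c⁻¹
  refine hscaled.congr_fun (fun y hy => ?_) measurableSet_Ioi
  have hy : 0 < y := hy
  rw [Real.sqrt_eq_rpow, ← Real.rpow_mul hy.le]
  simp only [smul_smul]
  norm_num [hc.ne']

theorem integral_mul_sub_le_integral_sq {G : Type*} [MeasurableSpace G] [AddGroup G]
    [MeasurableAdd G] [MeasurableNeg G] {μ : Measure G} [μ.IsNegInvariant] [μ.IsAddLeftInvariant]
    {h : G → ℝ} (hh : MemLp h 2 μ) (x : G) :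
    ∫ y, h (x - y) * h y ∂μ ≤ ∫ y, h y ^ 2 ∂μ := by
  have htr : MemLp (fun y => h (x - y)) 2 μ :=
    hh.comp_measurePreserving (Measure.measurePreserving_sub_left μ x)
  calc ∫ y, h (x - y) * h y ∂μ ≤ ∫ y, (h (x - y) ^ 2 + h y ^ 2) / 2 ∂μ :=
        integral_mono (htr.integrable_mul hh)
          ((htr.integrable_sq.add hh.integrable_sq).div_const 2)
          fun y => by nlinarith [sq_nonneg (h (x - y) - h y)]
    _ = ∫ y, h y ^ 2 ∂μ := by
        rw [integral_div, integral_add htr.integrable_sq hh.integrable_sq,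
          integral_sub_left_eq_self (fun z => h z ^ 2) μ x]
        ring

theorem integral_mul_sub_le_of_le_outside_ball {G : Type*} [MeasurableSpace G]
    [SeminormedAddGroup G] [MeasurableAdd G] [MeasurableNeg G] {μ : Measure G}
    [μ.IsNegInvariant] [μ.IsAddLeftInvariant] {h : G → ℝ} (h0 : ∀ x, 0 ≤ h x) (hi : Integrable h μ)
    {r M : ℝ} (hM : ∀ z, r ≤ ‖z‖ → h z ≤ M) {x : G} (hx : 2 * r ≤ ‖x‖) :
    ∫ y, h (x - y) * h y ∂μ ≤ 2 * M * ∫ y, h y ∂μ := by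
  have hpoint : ∀ y, h (x - y) * h y ≤ M * (h (x - y) + h y) := by
    intro y
    rcases le_or_gt r ‖y‖ with hy | hy
    · have hMy := hM y hy
      nlinarith [h0 y, h0 (x - y), mul_le_mul_of_nonneg_left hMy (h0 (x - y))]
    · have hxy : r ≤ ‖x - y‖ := by linarith [norm_le_norm_sub_add x y]
      have hMxy := hM (x - y) hxy
      nlinarith [h0 y, h0 (x - y), mul_le_mul_of_nonneg_right hMxy (h0 y)]
  calc ∫ y, h (x - y) * h y ∂μ ≤ ∫ y, M * (h (x - y) + h y) ∂μ :=
        integral_mono_of_nonneg (.of_forall fun y => mul_nonneg (h0 _) (h0 _))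
          (((hi.comp_sub_left x).add hi).const_mul M) (.of_forall hpoint)
    _ = 2 * M * ∫ y, h y ∂μ := by
        rw [integral_const_mul, integral_add (hi.comp_sub_left x) hi,
          integral_sub_left_eq_self h μ x]
        ring

theorem aestronglyMeasurable_integral_mul_sub_comp {α G : Type*} [MeasurableSpace α]
    [MeasurableSpace G] [AddGroup G] [MeasurableSub₂ G] {μ : Measure G} [SFinite μ]
    {ν : Measure α} {h : G → ℝ} (hh : Measurable h) {Φ : α → G} (hΦ : Measurable Φ) :
    AEStronglyMeasurable (fun τ => ∫ y, h (Φ τ - y) * h y ∂μ) ν :=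
  (StronglyMeasurable.integral_prod_right
    ((hh.comp ((hΦ.comp measurable_fst).sub measurable_snd)).mul
      (hh.comp measurable_snd)).stronglyMeasurable).aestronglyMeasurable

theorem measurable_of_eq_comp_norm_of_antitoneOn {E : Type*} [NormedAddCommGroup E]
    [MeasurableSpace E] [OpensMeasurableSpace E] {h : E → ℝ} {h_r : ℝ → ℝ}
    (hrad : ∀ x, h x = h_r ‖x‖) (hanti : AntitoneOn h_r (Ici 0)) : Measurable h := by
  have hmono : Antitone fun r => h_r (max r 0) := fun a b hab =>
    hanti (le_max_right a 0) (le_max_right b 0) (max_le_max hab le_rfl)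
  have heq : h = (fun r => h_r (max r 0)) ∘ norm := by
    funext x
    simp [hrad, norm_nonneg]
  rw [heq]
  exact hmono.measurable.comp measurable_norm

theorem enstrophy_interaction_integrable_general
    (h : EuclideanSpace ℝ (Fin 2) → ℝ) (h_r : ℝ → ℝ)
    (hrad : ∀ x, h x = h_r ‖x‖)
    (hnonneg : ∀ r : ℝ, 0 ≤ r → 0 ≤ h_r r)
    (hmono : ∀ a b : ℝ, 0 ≤ a → a ≤ b → h_r b ≤ h_r a)
    (hint : Integrable h) (hsq : MemLp h 2 volume)
    (L : ℝ → ℝ) (hLmeas : Measurable L)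
    (c₀ τ₀ : ℝ) (hc₀ : 0 < c₀)
    (hLgrow : ∀ τ : ℝ, τ₀ ≤ |τ| → c₀ * Real.sqrt |τ| ≤ L τ) :
    Integrable (fun τ : ℝ =>
      ∫ y, h (EuclideanSpace.single (0 : Fin 2) (L τ) - y) * h y) := by
  have h0 : ∀ x, 0 ≤ h x := fun x => (hrad x).symm ▸ hnonneg _ (norm_nonneg x)
  have hmeas : Measurable h :=
    measurable_of_eq_comp_norm_of_antitoneOn hrad fun a ha b _ hab => hmono a b ha hab
  have hdecay : Integrable fun τ => h_r (c₀ / 2 * √|τ|) := by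
    refine integrable_comp_mul_sqrt_abs ?_ (by positivity)
    have hpolar := (integrable_fun_norm_addHaar volume (f := h_r)).1 (hint.congr (.of_forall hrad))
    simpa [finrank_euclideanSpace_fin] using hpolar
  have hbounded : Integrable ((Icc (-τ₀) τ₀).indicator fun _ => ∫ y, h y ^ 2) :=
    (integrable_indicator_iff measurableSet_Icc).2 (integrableOn_const measure_Icc_lt_top.ne)
  refine (hbounded.add (hdecay.const_mul (2 * ∫ y, h y))).mono' ?_ (.of_forall fun τ => ?_)
  · have hsingle : Measurable fun a : ℝ => EuclideanSpace.single (0 : Fin 2) a :=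
      ((PiLp.continuous_toLp 2 _).comp (continuous_single 0)).measurable
    exact aestronglyMeasurable_integral_mul_sub_comp hmeas (hsingle.comp hLmeas)
  · set x := EuclideanSpace.single (0 : Fin 2) (L τ)
    rw [Real.norm_of_nonneg (integral_nonneg fun y => mul_nonneg (h0 _) (h0 _))]
    have hdecay_nonneg : 0 ≤ 2 * (∫ y, h y) * h_r (c₀ / 2 * √|τ|) :=
      mul_nonneg (mul_nonneg zero_le_two (integral_nonneg h0)) (hnonneg _ (by positivity))
    rw [Pi.add_apply]
    rcases le_or_gt |τ| τ₀ with hτ | hτ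
    · rw [indicator_of_mem (mem_Icc.2 (abs_le.1 hτ))]
      linarith [integral_mul_sub_le_integral_sq hsq x]
    · have hfar : 2 * (c₀ / 2 * √|τ|) ≤ ‖x‖ := by
        rw [PiLp.norm_single, Real.norm_eq_abs]
        linarith [hLgrow τ hτ.le, le_abs_self (L τ)]
      have hconv := integral_mul_sub_le_of_le_outside_ball h0 hint
        (fun z hz => (hrad z).symm ▸ hmono _ _ (by positivity) hz) hfar
      rw [indicator_of_notMem fun hmem => hτ.not_ge (abs_le.2 (mem_Icc.1 hmem))]
      linarith

/-- Let `h` be a nonnegative radial function on ℝ² with monotone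
nonincreasing profile, `h ∈ L¹ ∩ L²`, and let `L : ℝ → (0,∞)` be measurable with
`L(τ) ≥ c₀ √|τ|` for `|τ| ≥ τ₀`. Then `τ ↦ (h ∗ h)(point of norm L(τ))` is
Lebesgue integrable on ℝ. -/
theorem enstrophy_interaction_integrable
    (h : EuclideanSpace ℝ (Fin 2) → ℝ) (h_r : ℝ → ℝ)
    (hrad : ∀ x, h x = h_r ‖x‖)
    (hnonneg : ∀ r : ℝ, 0 ≤ r → 0 ≤ h_r r)
    (hmono : ∀ a b : ℝ, 0 ≤ a → a ≤ b → h_r b ≤ h_r a)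
    (hint : Integrable h) (hsq : MemLp h 2 volume)
    (L : ℝ → ℝ) (hLmeas : Measurable L) (hLpos : ∀ τ, 0 < L τ)
    (c₀ τ₀ : ℝ) (hc₀ : 0 < c₀) (hτ₀ : 0 < τ₀)
    (hLgrow : ∀ τ : ℝ, τ₀ ≤ |τ| → c₀ * Real.sqrt |τ| ≤ L τ) :
    Integrable (fun τ : ℝ =>
      ∫ y, h (EuclideanSpace.single (0 : Fin 2) (L τ) - y) * h y) :=
  enstrophy_interaction_integrable_general h h_r hrad hnonneg hmono hint hsq L hLmeas c₀ τ₀ hc₀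
    hLgrow
end

section
/- There is an absolute constant C > 0 with the following property. Let h : ℝ² → [0,∞) be measurable with A := ess sup_{y ∈ ℝ²} |y|³ h(y) < ∞, B := ∫_{ℝ²} |y| h(y) dy < ∞, and h ∈ L¹(ℝ²). Then for every x ∈ ℝ² with |x| ≥ 1, | ∫_{ℝ²} log(|x − y|/|x|) h(y) dy | ≤ C (A + B + ‖h‖_{L¹}) / |x|. -/
/-!
Split the plane according to whether `‖x - y‖ ≥ ‖x‖ / 2`. There `log (‖x - y‖ / ‖x‖)` is
comparable to `(‖x - y‖ - ‖x‖) / ‖x‖`, bounded by `2‖y‖ / ‖x‖`, which integrates to `2B / ‖x‖`.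
Near `x` instead `‖y‖ > ‖x‖ / 2`, so `h ≤ 8A / ‖x‖³` there, and by the layer-cake formula
`∫ log⁺ (R / ‖x - y‖) dy = π R² / 2`, which contributes `4πA / ‖x‖`.
-/

open MeasureTheory Real Metric Module

namespace Real

lemma abs_log_le_two_mul_abs_sub_one {t : ℝ} (ht : 1 / 2 ≤ t) : |log t| ≤ 2 * |t - 1| := by
  have ht0 : 0 < t := by linarith
  have hinv : |1 - t⁻¹| ≤ 2 * |t - 1| := by
    rw [show 1 - t⁻¹ = (t - 1) / t by field_simp, abs_div, abs_of_pos ht0, div_le_iff₀ ht0]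
    nlinarith [abs_nonneg (t - 1)]
  refine abs_le.2 ⟨?_, ?_⟩
  · linarith [neg_abs_le (1 - t⁻¹), one_sub_inv_le_log_of_pos ht0]
  · linarith [log_le_sub_one_of_pos ht0, le_abs_self (t - 1), abs_nonneg (t - 1)]

lemma abs_log_div_mul_le_of_abs_sub_le {R s r v A : ℝ} (hR : 0 < R) (hs : 0 ≤ s)
    (hsR : |s - R| ≤ r) (hv : 0 ≤ v) (hA : r ^ 3 * v ≤ A) :
    |log (s / R)| * v ≤ 2 / R * (r * v) + 8 * A / R ^ 3 * log⁺ (R / s) := by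
  have hr : 0 ≤ r := (abs_nonneg _).trans hsR
  have hA0 : 0 ≤ A := (by positivity : 0 ≤ r ^ 3 * v).trans hA
  rcases le_or_gt (R / 2) s with hfar | hnear
  · have hlog : |log (s / R)| ≤ 2 / R * r := by
      calc |log (s / R)| ≤ 2 * |s / R - 1| :=
            abs_log_le_two_mul_abs_sub_one (by rw [le_div_iff₀ hR]; linarith)
        _ = 2 / R * |s - R| := by
            rw [div_sub_one hR.ne', abs_div, abs_of_pos hR]; ring
        _ ≤ 2 / R * r := by gcongr
    have : 0 ≤ 8 * A / R ^ 3 * log⁺ (R / s) := mul_nonneg (by positivity) posLog_nonneg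
    nlinarith
  · have hlog : |log (s / R)| ≤ log⁺ (R / s) := by
      rw [abs_of_nonpos (log_nonpos (by positivity) ((div_le_one hR).2 (by linarith))),
        ← log_inv, inv_div]
      exact le_max_right _ _
    have hv' : v ≤ 8 * A / R ^ 3 := by
      rw [le_div_iff₀ (by positivity)]
      have : R ^ 3 ≤ 8 * r ^ 3 := by
        have : R / 2 ≤ r := by linarith [(abs_le.1 hsR).1]
        nlinarith [pow_le_pow_left₀ (by positivity) this 3]
      nlinarith
    calc |log (s / R)| * v ≤ log⁺ (R / s) * (8 * A / R ^ 3) :=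
          mul_le_mul hlog hv' hv posLog_nonneg
      _ ≤ 2 / R * (r * v) + 8 * A / R ^ 3 * log⁺ (R / s) := by
          have : 0 ≤ 2 / R * (r * v) := by positivity
          linarith

end Real

section HaarMeasure

variable {E : Type*} [NormedAddCommGroup E]

lemma setOf_lt_posLog_div_norm_sub (x : E) {R t : ℝ} (hR : 0 < R) (ht : 0 < t) :
    {y | t < log⁺ (R / ‖x - y‖)} = ball x (R * exp (-t)) \ {x} := by
  ext y
  simp only [Set.mem_ofPred_eq, Set.mem_sdiff, mem_ball, Set.mem_singleton_iff, posLog, lt_max_iff,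
    ht.not_gt, false_or, dist_comm y x, dist_eq_norm]
  rcases eq_or_ne y x with rfl | hyx
  · simp [ht.le.not_gt]
  · have hs : 0 < ‖x - y‖ := norm_sub_pos_iff.2 hyx.symm
    rw [lt_log_iff_exp_lt (by positivity), lt_div_iff₀ hs, exp_neg, ← div_eq_mul_inv,
      lt_div_iff₀ (exp_pos t)]
    simp [hyx, mul_comm]

variable [MeasurableSpace E] [BorelSpace E]

lemma measurable_posLog_div_norm_sub (x : E) (R : ℝ) : Measurable fun y ↦ log⁺ (R / ‖x - y‖) :=
  continuous_posLog.measurable.comp (by fun_prop)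

variable [NormedSpace ℝ E] [FiniteDimensional ℝ E] [Nontrivial E]
  (μ : Measure E) [μ.IsAddHaarMeasure]

lemma lintegral_posLog_div_norm_sub (x : E) {R : ℝ} (hR : 0 < R) :
    ∫⁻ y, ENNReal.ofReal (log⁺ (R / ‖x - y‖)) ∂μ
      = ENNReal.ofReal (R ^ finrank ℝ E / finrank ℝ E) * μ (ball 0 1) := by
  set d := finrank ℝ E
  have hd : (0 : ℝ) < d := by simpa [d] using finrank_pos (R := ℝ) (M := E)
  rw [lintegral_eq_lintegral_meas_lt μ (ae_of_all _ fun _ ↦ posLog_nonneg)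
    (measurable_posLog_div_norm_sub x R).aemeasurable]
  calc ∫⁻ t in Set.Ioi 0, μ {y | t < log⁺ (R / ‖x - y‖)}
      = ∫⁻ t in Set.Ioi 0, ENNReal.ofReal (R ^ d * exp (-d * t)) * μ (ball 0 1) := by
        refine setLIntegral_congr_fun measurableSet_Ioi fun t ht ↦ ?_
        rw [setOf_lt_posLog_div_norm_sub x hR ht, measure_sdiff_null (measure_singleton x),
          Measure.addHaar_ball μ x (by positivity), mul_pow, ← exp_nat_mul, mul_neg, neg_mul]
    _ = ENNReal.ofReal (R ^ d / d) * μ (ball 0 1) := by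
        rw [lintegral_mul_const' _ _ measure_ball_lt_top.ne, ← ofReal_integral_eq_lintegral_ofReal
          ((integrableOn_exp_mul_Ioi (by linarith) 0).const_mul _)
          (ae_of_all _ fun _ ↦ by positivity), integral_const_mul,
          integral_exp_mul_Ioi (by linarith)]
        simp [div_eq_mul_inv]

lemma integrable_posLog_div_norm_sub (x : E) {R : ℝ} (hR : 0 < R) :
    Integrable (fun y ↦ log⁺ (R / ‖x - y‖)) μ := by
  rw [← lintegral_ofReal_ne_top_iff_integrable
    (measurable_posLog_div_norm_sub x R).aestronglyMeasurable (ae_of_all _ fun _ ↦ posLog_nonneg),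
    lintegral_posLog_div_norm_sub μ x hR]
  exact ENNReal.mul_ne_top ENNReal.ofReal_ne_top measure_ball_lt_top.ne

lemma integral_posLog_div_norm_sub (x : E) {R : ℝ} (hR : 0 < R) :
    ∫ y, log⁺ (R / ‖x - y‖) ∂μ = R ^ finrank ℝ E / finrank ℝ E * μ.real (ball 0 1) := by
  rw [integral_eq_lintegral_of_nonneg_ae (ae_of_all _ fun _ ↦ posLog_nonneg)
    (measurable_posLog_div_norm_sub x R).aestronglyMeasurable,
    lintegral_posLog_div_norm_sub μ x hR, ENNReal.toReal_mul,
    ENNReal.toReal_ofReal (by positivity), measureReal_def]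

end HaarMeasure

theorem abs_integral_log_norm_sub_div_norm_mul_le {E : Type*} [NormedAddCommGroup E]
    [NormedSpace ℝ E] [FiniteDimensional ℝ E] [MeasurableSpace E] [BorelSpace E] [Nontrivial E]
    (μ : Measure E) [μ.IsAddHaarMeasure] {h : E → ℝ} {A : ℝ} (hh : ∀ y, 0 ≤ h y)
    (hA : ∀ᵐ y ∂μ, ‖y‖ ^ 3 * h y ≤ A) (hmom : Integrable (fun y ↦ ‖y‖ * h y) μ)
    {x : E} (hx : x ≠ 0) :
    |∫ y, log (‖x - y‖ / ‖x‖) * h y ∂μ| ≤ 2 / ‖x‖ * ∫ y, ‖y‖ * h y ∂μ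
      + 8 * A / ‖x‖ ^ 3 * (‖x‖ ^ finrank ℝ E / finrank ℝ E * μ.real (ball 0 1)) := by
  have hR : 0 < ‖x‖ := norm_pos_iff.2 hx
  have hbound : ∀ᵐ y ∂μ, ‖log (‖x - y‖ / ‖x‖) * h y‖
      ≤ 2 / ‖x‖ * (‖y‖ * h y) + 8 * A / ‖x‖ ^ 3 * log⁺ (‖x‖ / ‖x - y‖) := by
    filter_upwards [hA] with y hy
    have hsR : |‖x - y‖ - ‖x‖| ≤ ‖y‖ := by
      simpa using abs_norm_sub_norm_le (x - y) x
    rw [norm_mul, Real.norm_eq_abs, Real.norm_of_nonneg (hh y)]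
    exact abs_log_div_mul_le_of_abs_sub_le hR (norm_nonneg _) hsR (hh y) hy
  calc |∫ y, log (‖x - y‖ / ‖x‖) * h y ∂μ|
      ≤ ∫ y, 2 / ‖x‖ * (‖y‖ * h y) + 8 * A / ‖x‖ ^ 3 * log⁺ (‖x‖ / ‖x - y‖) ∂μ :=
        norm_integral_le_of_norm_le
          ((hmom.const_mul _).add ((integrable_posLog_div_norm_sub μ x hR).const_mul _)) hbound
    _ = _ := by
        rw [integral_add (hmom.const_mul _) ((integrable_posLog_div_norm_sub μ x hR).const_mul _),
          integral_const_mul, integral_const_mul, integral_posLog_div_norm_sub μ x hR]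

lemma EuclideanSpace.measureReal_ball_zero_one_fin_two :
    volume.real (ball (0 : EuclideanSpace ℝ (Fin 2)) 1) = π := by
  simp [measureReal_def, pi_nonneg]

/-- There is an absolute constant `C > 0` such that for every
nonnegative integrable `h` on ℝ² with `|y|³ h(y) ≤ A` a.e. and
`B = ∫ |y| h(y) dy < ∞`, one has
`|∫ log(|x−y|/|x|) h(y) dy| ≤ C (A + B + ‖h‖_{L¹}) / |x|` whenever `|x| ≥ 1`. -/
theorem log_correction_decay :
    ∃ C : ℝ, 0 < C ∧
      ∀ (h : EuclideanSpace ℝ (Fin 2) → ℝ) (A B : ℝ),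
        (∀ y, 0 ≤ h y) → Integrable h →
        (0 ≤ A) → (∀ᵐ y : EuclideanSpace ℝ (Fin 2), ‖y‖ ^ 3 * h y ≤ A) →
        Integrable (fun y : EuclideanSpace ℝ (Fin 2) => ‖y‖ * h y) →
        (B = ∫ y : EuclideanSpace ℝ (Fin 2), ‖y‖ * h y) →
        ∀ x : EuclideanSpace ℝ (Fin 2), 1 ≤ ‖x‖ →
          |∫ y, Real.log (‖x - y‖ / ‖x‖) * h y|
            ≤ C * (A + B + ∫ y, h y) / ‖x‖ := by
  refine ⟨4 * π + 2, by positivity, fun h A B hh _ hA0 hA hmom hB x hx ↦ ?_⟩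
  have hR : 0 < ‖x‖ := one_pos.trans_le hx
  have hB0 : 0 ≤ B := hB ▸ integral_nonneg fun y ↦ mul_nonneg (norm_nonneg y) (hh y)
  have hI0 : 0 ≤ ∫ y, h y := integral_nonneg hh
  calc |∫ y, log (‖x - y‖ / ‖x‖) * h y|
      ≤ 2 / ‖x‖ * B + 8 * A / ‖x‖ ^ 3 * (‖x‖ ^ 2 / 2 * π) := by
        simpa [hB, finrank_euclideanSpace_fin, EuclideanSpace.measureReal_ball_zero_one_fin_two]
          using abs_integral_log_norm_sub_div_norm_mul_le volume hh hA hmom (norm_pos_iff.1 hR)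
    _ = (4 * π * A + 2 * B) / ‖x‖ := by field_simp; ring
    _ ≤ (4 * π + 2) * (A + B + ∫ y, h y) / ‖x‖ := by
        gcongr
        nlinarith [pi_pos]
end

section
/- Let h_r : [0,∞) → (0,∞) be continuous with 2π ∫₀^∞ s h_r(s) ds = 1, differentiable with h_r'(s) < 0 for all s > 0, and define P_K(r) := 2π ∫₀^r s h_r(s) ds. Let H_G : (0,∞) → ℝ be any differentiable function satisfying H_G'(r) = −(1 − P_K(r))/r for all r > 0. Then: (i) the function r ↦ H_G(√r) is strictly decreasing and strictly convex on (0,∞); and (ii) the function H_P(r) := (1/2) log r + H_G(√r) is strictly increasing and strictly concave on (0,∞). -/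
/-!
In the variable `r` (squared distance) the chain rule gives
`(H_G ∘ √)'(r) = -(1 - P_K(√r)) / (2r)` and `H_P'(r) = P_K(√r) / (2r)`.
As `P_K` increases from `0` to `1`, the first derivative is negative and increasing.
For the second, the substitution `t = s u` gives `P_K(s) / s² = 2π ∫₀¹ u h(su) du`,
a weighted mean of `h` over the disc of radius `s`, which strictly decreases in `s`
because `h` does.
-/

open MeasureTheory Set

section DerivCriteria

variable {D : Set ℝ} {f f' : ℝ → ℝ}

theorem strictConvexOn_of_hasDerivAt_of_strictMonoOn (hD : Convex ℝ D)
    (hf : ∀ x ∈ D, HasDerivAt f (f' x) x) (hf' : StrictMonoOn f' D) : StrictConvexOn ℝ D f :=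
  StrictMonoOn.strictConvexOn_of_deriv hD (fun x hx => (hf x hx).continuousAt.continuousWithinAt)
    ((hf'.mono interior_subset).congr fun x hx => (hf x (interior_subset hx)).deriv.symm)

theorem strictConcaveOn_of_hasDerivAt_of_strictAntiOn (hD : Convex ℝ D)
    (hf : ∀ x ∈ D, HasDerivAt f (f' x) x) (hf' : StrictAntiOn f' D) : StrictConcaveOn ℝ D f :=
  StrictAntiOn.strictConcaveOn_of_deriv hD (fun x hx => (hf x hx).continuousAt.continuousWithinAt)
    ((hf'.mono interior_subset).congr fun x hx => (hf x (interior_subset hx)).deriv.symm)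

theorem strictMonoOn_of_hasDerivAt_pos (hD : Convex ℝ D)
    (hf : ∀ x ∈ D, HasDerivAt f (f' x) x) (hf' : ∀ x ∈ D, 0 < f' x) : StrictMonoOn f D :=
  strictMonoOn_of_hasDerivWithinAt_pos hD (fun x hx => (hf x hx).continuousAt.continuousWithinAt)
    (fun x hx => (hf x (interior_subset hx)).hasDerivWithinAt)
    fun x hx => hf' x (interior_subset hx)

theorem strictAntiOn_of_hasDerivAt_neg (hD : Convex ℝ D)
    (hf : ∀ x ∈ D, HasDerivAt f (f' x) x) (hf' : ∀ x ∈ D, f' x < 0) : StrictAntiOn f D :=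
  strictAntiOn_of_hasDerivWithinAt_neg hD (fun x hx => (hf x hx).continuousAt.continuousWithinAt)
    (fun x hx => (hf x (interior_subset hx)).hasDerivWithinAt)
    fun x hx => hf' x (interior_subset hx)

end DerivCriteria

theorem hasDerivAt_comp_sqrt {g : ℝ → ℝ} {c r : ℝ} (hr : 0 < r)
    (hg : HasDerivAt g (c / Real.sqrt r) (Real.sqrt r)) :
    HasDerivAt (fun x => g (Real.sqrt x)) (c / (2 * r)) r := by
  have := hg.comp r (Real.hasDerivAt_sqrt hr.ne')
  rwa [← div_eq_mul_one_div, div_div, mul_left_comm, Real.mul_self_sqrt hr.le] at this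

section RadialMass

variable {h : ℝ → ℝ}

theorem intervalIntegrable_id_mul_of_continuousOn_Ici (hc : ContinuousOn h (Ici 0)) {a b : ℝ}
    (ha : 0 ≤ a) (hb : 0 ≤ b) : IntervalIntegrable (fun s => s * h s) volume a b :=
  ((continuousOn_id.mul hc).mono (ordConnected_Ici.uIcc_subset ha hb)).intervalIntegrable

theorem strictMonoOn_integral_id_mul (hc : ContinuousOn h (Ici 0))
    (hpos : ∀ s, 0 < s → 0 < h s) :
    StrictMonoOn (fun r => ∫ s in (0 : ℝ)..r, s * h s) (Ici 0) := by
  intro a ha b hb hab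
  have hI := @intervalIntegrable_id_mul_of_continuousOn_Ici h hc
  dsimp only
  rw [← intervalIntegral.integral_add_adjacent_intervals (hI le_rfl ha) (hI ha hb)]
  refine lt_add_of_pos_right _ (intervalIntegral.intervalIntegral_pos_of_pos_on (hI ha hb)
    (fun x hx => ?_) hab)
  have hx : 0 < x := ha.out.trans_lt hx.1
  exact mul_pos hx (hpos x hx)

theorem integral_id_mul_lt_setIntegral_Ioi (hc : ContinuousOn h (Ici 0))
    (hpos : ∀ s, 0 < s → 0 < h s) (hint : IntegrableOn (fun s => s * h s) (Ioi 0))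
    {r : ℝ} (hr : 0 ≤ r) :
    ∫ s in (0 : ℝ)..r, s * h s < ∫ s in Ioi (0 : ℝ), s * h s := calc
  _ < ∫ s in (0 : ℝ)..(r + 1), s * h s :=
    strictMonoOn_integral_id_mul hc hpos hr (by simp only [mem_Ici]; linarith) (by linarith)
  _ = ∫ s in Ioc (0 : ℝ) (r + 1), s * h s := intervalIntegral.integral_of_le (by linarith)
  _ ≤ ∫ s in Ioi (0 : ℝ), s * h s := by
    refine setIntegral_mono_set hint ?_ Ioc_subset_Ioi_self.eventuallyLE
    filter_upwards [ae_restrict_mem measurableSet_Ioi] with x hx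
    exact (mul_pos hx (hpos x hx)).le

theorem integral_id_mul_eq_sq_mul (s : ℝ) :
    ∫ t in (0 : ℝ)..s, t * h t = s ^ 2 * ∫ u in (0 : ℝ)..1, u * h (s * u) := by
  have := intervalIntegral.smul_integral_comp_mul_left (fun t => t * h t) s (a := 0) (b := 1)
  simp only [mul_zero, mul_one, smul_eq_mul, mul_assoc, intervalIntegral.integral_const_mul]
    at this
  rw [← this, sq, mul_assoc]

theorem strictAntiOn_integral_id_mul_div_sq (hc : ContinuousOn h (Ici 0))
    (hanti : StrictAntiOn h (Ioi 0)) :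
    StrictAntiOn (fun s => (∫ t in (0 : ℝ)..s, t * h t) / s ^ 2) (Ioi 0) := by
  have hmean : EqOn (fun s => ∫ u in (0 : ℝ)..1, u * h (s * u))
      (fun s => (∫ t in (0 : ℝ)..s, t * h t) / s ^ 2) (Ioi 0) := fun s hs => by
    have : s ^ 2 ≠ 0 := pow_ne_zero 2 (ne_of_gt hs)
    simp only [integral_id_mul_eq_sq_mul s, mul_div_cancel_left₀ _ this]
  refine StrictAntiOn.congr (fun s₁ hs₁ s₂ hs₂ hs => ?_) hmean
  have hcont : ∀ s ∈ Ioi (0 : ℝ), ContinuousOn (fun u => u * h (s * u)) (Icc 0 1) :=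
    fun s hs => continuousOn_id.mul <| hc.comp (continuousOn_const.mul continuousOn_id)
      fun u hu => mul_nonneg (le_of_lt hs) hu.1
  have hlt : ∀ u, 0 < u → u * h (s₂ * u) < u * h (s₁ * u) := fun u hu =>
    mul_lt_mul_of_pos_left (hanti (mul_pos hs₁ hu) (mul_pos hs₂ hu)
      (mul_lt_mul_of_pos_right hs hu)) hu
  exact intervalIntegral.integral_lt_integral_of_continuousOn_of_le_of_exists_lt zero_lt_one
    (hcont s₂ hs₂) (hcont s₁ hs₁) (fun u hu => (hlt u hu.1).le)
    ⟨1, ⟨zero_le_one, le_rfl⟩, hlt 1 one_pos⟩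

end RadialMass

section GreenCorrection

variable {P G : ℝ → ℝ}

theorem strictAntiOn_and_strictConvexOn_comp_sqrt
    (hG : ∀ r, 0 < r → HasDerivAt G (-(1 - P r) / r) r)
    (hP : MonotoneOn P (Ioi 0)) (hP1 : ∀ s, 0 < s → P s < 1) :
    StrictAntiOn (fun r => G (Real.sqrt r)) (Ioi 0) ∧
      StrictConvexOn ℝ (Ioi 0) (fun r => G (Real.sqrt r)) := by
  have hF (r : ℝ) (hr : r ∈ Ioi 0) := hasDerivAt_comp_sqrt hr (hG _ (Real.sqrt_pos.2 hr))
  refine ⟨strictAntiOn_of_hasDerivAt_neg (convex_Ioi 0) hF fun r hr => ?_,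
    strictConvexOn_of_hasDerivAt_of_strictMonoOn (convex_Ioi 0) hF fun a ha b hb hab => ?_⟩
  · have := hP1 _ (Real.sqrt_pos.2 hr)
    exact div_neg_of_neg_of_pos (by linarith) (by linarith [hr.out])
  · have hsa := Real.sqrt_pos.2 ha
    have hsb := Real.sqrt_pos.2 hb
    have := hP1 _ hsb
    have ha0 : 0 < a := ha
    rw [neg_div, neg_div, neg_lt_neg_iff]
    calc (1 - P √b) / (2 * b) < (1 - P √b) / (2 * a) := by gcongr
      _ ≤ (1 - P √a) / (2 * a) := by gcongr; exact hP hsa hsb (Real.sqrt_le_sqrt hab.le)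

theorem strictMonoOn_and_strictConcaveOn_log_add_comp_sqrt
    (hG : ∀ r, 0 < r → HasDerivAt G (-(1 - P r) / r) r)
    (hP0 : ∀ s, 0 < s → 0 < P s) (hPdiv : StrictAntiOn (fun s => P s / s ^ 2) (Ioi 0)) :
    StrictMonoOn (fun r => 1 / 2 * Real.log r + G (Real.sqrt r)) (Ioi 0) ∧
      StrictConcaveOn ℝ (Ioi 0) (fun r => 1 / 2 * Real.log r + G (Real.sqrt r)) := by
  have hF (r : ℝ) (hr : r ∈ Ioi 0) :
      HasDerivAt (fun r => 1 / 2 * Real.log r + G (Real.sqrt r)) (P √r / (2 * r)) r := by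
    refine (((Real.hasDerivAt_log (ne_of_gt hr)).const_mul (1 / 2)).add
      (hasDerivAt_comp_sqrt hr (hG _ (Real.sqrt_pos.2 hr)))).congr_deriv ?_
    field_simp
    ring
  refine ⟨strictMonoOn_of_hasDerivAt_pos (convex_Ioi 0) hF fun r hr => ?_,
    strictConcaveOn_of_hasDerivAt_of_strictAntiOn (convex_Ioi 0) hF fun a ha b hb hab => ?_⟩
  · exact div_pos (hP0 _ (Real.sqrt_pos.2 hr)) (by linarith [hr.out])
  · have := hPdiv (Real.sqrt_pos.2 ha) (Real.sqrt_pos.2 hb) (Real.sqrt_lt_sqrt ha.out.le hab)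
    simp only [Real.sq_sqrt ha.out.le, Real.sq_sqrt hb.out.le] at this
    rw [mul_comm 2, mul_comm 2, ← div_div, ← div_div]
    exact div_lt_div_of_pos_right this two_pos

end GreenCorrection

/-- For a positive, continuous, strictly decreasing
(`h_r' < 0`) profile `h_r` with `2π ∫₀^∞ s h_r(s) ds = 1`,
`P_K(r) = 2π ∫₀^r s h_r(s) ds`, and any differentiable `H_G` on `(0,∞)` with
`H_G'(r) = −(1 − P_K(r))/r`: (i) `r ↦ H_G(√r)` is strictly decreasing and strictly
convex on `(0,∞)`; (ii) `H_P(r) = (1/2) log r + H_G(√r)` is strictly increasing and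
strictly concave on `(0,∞)`. -/
theorem H_G_H_P_properties (h_r : ℝ → ℝ)
    (hcont : ContinuousOn h_r (Set.Ici 0))
    (hpos : ∀ s : ℝ, 0 ≤ s → 0 < h_r s)
    (hint : IntegrableOn (fun s => s * h_r s) (Set.Ioi 0))
    (hnorm : 2 * Real.pi * ∫ s in Set.Ioi (0 : ℝ), s * h_r s = 1)
    (h_r' : ℝ → ℝ)
    (hderiv : ∀ s : ℝ, 0 < s → HasDerivAt h_r (h_r' s) s)
    (hneg : ∀ s : ℝ, 0 < s → h_r' s < 0)
    (P_K : ℝ → ℝ)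
    (hPK : ∀ r : ℝ, P_K r = 2 * Real.pi * ∫ s in (0 : ℝ)..r, s * h_r s)
    (H_G : ℝ → ℝ)
    (hHG : ∀ r : ℝ, 0 < r → HasDerivAt H_G (-(1 - P_K r) / r) r)
    (H_P : ℝ → ℝ)
    (hHP : ∀ r : ℝ, H_P r = (1 / 2) * Real.log r + H_G (Real.sqrt r)) :
    (StrictAntiOn (fun r => H_G (Real.sqrt r)) (Set.Ioi 0) ∧
      StrictConvexOn ℝ (Set.Ioi 0) (fun r => H_G (Real.sqrt r))) ∧
    (StrictMonoOn H_P (Set.Ioi 0) ∧ StrictConcaveOn ℝ (Set.Ioi 0) H_P) := by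
  have hpos' (s : ℝ) (hs : 0 < s) : 0 < h_r s := hpos s hs.le
  have hanti : StrictAntiOn h_r (Ioi 0) := strictAntiOn_of_hasDerivAt_neg (convex_Ioi 0) hderiv hneg
  have hPmono : StrictMonoOn P_K (Ici 0) := fun a ha b hb hab => by
    simpa only [hPK] using mul_lt_mul_of_pos_left
      (strictMonoOn_integral_id_mul hcont hpos' ha hb hab) Real.two_pi_pos
  have hP0 : P_K 0 = 0 := by simp [hPK]
  have hPlt1 (s : ℝ) (hs : 0 < s) : P_K s < 1 := by
    simpa only [hPK, hnorm] using mul_lt_mul_of_pos_left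
      (integral_id_mul_lt_setIntegral_Ioi hcont hpos' hint hs.le) Real.two_pi_pos
  have hPdiv : StrictAntiOn (fun s => P_K s / s ^ 2) (Ioi 0) := fun a ha b hb hab => by
    simpa only [hPK, mul_div_assoc] using mul_lt_mul_of_pos_left
      (strictAntiOn_integral_id_mul_div_sq hcont hanti ha hb hab) Real.two_pi_pos
  rw [show H_P = _ from funext hHP]
  refine ⟨strictAntiOn_and_strictConvexOn_comp_sqrt hHG
      (hPmono.monotoneOn.mono Ioi_subset_Ici_self) hPlt1,
    strictMonoOn_and_strictConcaveOn_log_add_comp_sqrt hHG (fun s hs => ?_) hPdiv⟩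
  simpa only [hP0] using hPmono self_mem_Ici hs.le hs
end
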